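/- For any program P and positive constraint database Δ, the following are equivalent: (1) there is an algorithmic step sequence from ⊥ to Δ and T_P(Δ) = {Δ} (i.e. the abstract solving algorithm may successfully return Δ); (2) Δ ∈ lfp T_P* and Δ is finite. -/
import Mathlib


open scoped Classical

namespace FCLP

/-! ### Terms -/

/-- Ground (Herbrand) terms: uninterpreted function symbols applied to ground terms. -/
inductive GTerm : Type where
  | func : ℕ → List GTerm → GTerm

/-- Terms possibly containing variables. -/
inductive VTerm : Type where
  | var : ℕ → VTerm
  | func : ℕ → List VTerm → VTerm

/-- A substitution is a total map from variables to ground terms. -/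
abbrev Subst := ℕ → GTerm

mutual
  /-- Applying a substitution to a term. -/
  def VTerm.subst (σ : Subst) : VTerm → GTerm
    | .var x => σ x
    | .func f args => .func f (VTerm.substList σ args)
  def VTerm.substList (σ : Subst) : List VTerm → List GTerm
    | [] => []
    | t :: ts => VTerm.subst σ t :: VTerm.substList σ ts
end

/-- The variable `x` occurs in the term. -/
inductive VTerm.HasVar : VTerm → ℕ → Prop where
  | var (x : ℕ) : VTerm.HasVar (.var x) x
  | func {f : ℕ} {args : List VTerm} {t : VTerm} {x : ℕ} :
      t ∈ args → VTerm.HasVar t x → VTerm.HasVar (.func f args) x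

/-! ### Attributes, facts, rules, programs -/

/-- An attribute `p(t₁,...,tₙ)`: a predicate applied to ground terms. -/
structure Attr where
  pred : ℕ
  args : List GTerm

/-- A fact `p(t̄) is v`. -/
structure Fact where
  attr : Attr
  value : GTerm

/-- A premise `p(t̄) is v`, possibly containing variables. -/
structure VAtom where
  pred : ℕ
  args : List VTerm
  value : VTerm

def VAtom.subst (σ : Subst) (A : VAtom) : Fact :=
  ⟨⟨A.pred, A.args.map (VTerm.subst σ)⟩, A.value.subst σ⟩

def VAtom.HasVar (A : VAtom) (x : ℕ) : Prop :=
  (∃ t ∈ A.args, t.HasVar x) ∨ A.value.HasVar x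

/-- A rule head: open `p(t̄) is? v` or closed `p(t̄) is {v₁,...,vₘ}`. -/
inductive Head : Type where
  | opn : ℕ → List VTerm → VTerm → Head
  | closed : ℕ → List VTerm → List VTerm → Head

def Head.HasVar : Head → ℕ → Prop
  | .opn _ args v, x => (∃ t ∈ args, t.HasVar x) ∨ v.HasVar x
  | .closed _ args vs, x => (∃ t ∈ args, t.HasVar x) ∨ ∃ v ∈ vs, v.HasVar x

/-- The ground attribute of a rule head under a substitution. -/
def Head.groundAttr (σ : Subst) : Head → Attr
  | .opn p args _ => ⟨p, args.map (VTerm.subst σ)⟩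
  | .closed p args _ => ⟨p, args.map (VTerm.subst σ)⟩

/-- A rule `H ← F` with a finite collection of premises. -/
structure Rule where
  head : Head
  prems : List VAtom

/-- Wellformedness: closed heads offer at least one value, and every
variable in the head occurs in a premise. -/
def Rule.WF (r : Rule) : Prop :=
  (∀ x, r.head.HasVar x → ∃ A ∈ r.prems, A.HasVar x) ∧
  (∀ p args vs, r.head = .closed p args vs → vs ≠ [])

/-- A program is a set of rules. -/
abbrev Program := Set Rule

/-- A program is a *finite* set of *wellformed* rules. -/
def Program.WFP (P : Program) : Prop := P.Finite ∧ ∀ r ∈ P, r.WF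

/-! ### Fact-set semantics -/

/-- A set of facts is consistent when each attribute has at most one value. -/
def Consistent (D : Set Fact) : Prop :=
  ∀ f ∈ D, ∀ g ∈ D, f.attr = g.attr → f = g

/-- `σ` satisfies the premises `F` in the fact-set database `D`. -/
def satF (σ : Subst) (F : List VAtom) (D : Set Fact) : Prop :=
  ∀ A ∈ F, A.subst σ ∈ D

/-- Fact-set evolution `D →_P S`. -/
inductive Evolve (P : Program) : Set Fact → Set (Set Fact) → Prop where
  | triv (D : Set Fact) : Evolve P D {D}
  | closed {D : Set Fact} {r : Rule} {p : ℕ} {args vs : List VTerm} {σ : Subst} :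
      r ∈ P → r.head = .closed p args vs → satF σ r.prems D →
      Evolve P D
        { E | ∃ v ∈ vs,
            E = insert (⟨⟨p, args.map (VTerm.subst σ)⟩, VTerm.subst σ v⟩ : Fact) D ∧
            Consistent E }
  | opn {D : Set Fact} {r : Rule} {p : ℕ} {args : List VTerm} {v : VTerm} {σ : Subst} :
      r ∈ P → r.head = .opn p args v → satF σ r.prems D →
      Evolve P D
        ({D} ∪ { E | E = insert (⟨⟨p, args.map (VTerm.subst σ)⟩, VTerm.subst σ v⟩ : Fact) D ∧
                     Consistent E })

/-- `P` allows `D` to step to `D'`. -/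
def Step (P : Program) (D D' : Set Fact) : Prop := ∃ S, Evolve P D S ∧ D' ∈ S

/-- A database is saturated when its only evolution is the singleton of itself. -/
def Saturated (P : Program) (D : Set Fact) : Prop := ∀ S, Evolve P D S → S = {D}

/-- A solution: a saturated database reachable from `∅` by a (finite) step sequence. -/
def Solution (P : Program) (D : Set Fact) : Prop :=
  Relation.ReflTransGen (Step P) ∅ D ∧ Saturated P D

/-! ### Constraints and constraint databases -/

/-- A constraint: `just t` or `noneOf X`. -/
inductive Constraint : Type where
  | just : GTerm → Constraint
  | noneOf : Set GTerm → Constraint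

/-- The order on constraints. -/
def Constraint.le : Constraint → Constraint → Prop
  | .noneOf X, .noneOf Y => X ⊆ Y
  | .noneOf X, .just t => t ∉ X
  | .just t, .just t' => t = t'
  | .just _, .noneOf _ => False

instance : LE Constraint := ⟨Constraint.le⟩

/-- Least upper bound of a (compatible) set of constraints: if some `just t` is present
it is the lub; otherwise it is `noneOf` of the union. -/
noncomputable def Constraint.lub (C : Set Constraint) : Constraint :=
  if h : ∃ t, Constraint.just t ∈ C then .just h.choose
  else .noneOf (⋃₀ { X | Constraint.noneOf X ∈ C })

/-- A constraint database: a map from ground attributes to constraints,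
ordered pointwise (via the `Pi` order). -/
abbrev CDB := Attr → Constraint

/-- The least constraint database: every attribute maps to `noneOf ∅`. -/
def cdbBot : CDB := fun _ => .noneOf ∅

/-- Pointwise least upper bound of a (compatible) set of constraint databases. -/
noncomputable def CDB.lub (S : Set CDB) : CDB :=
  fun a => Constraint.lub ((fun Δ => Δ a) '' S)

/-- A subset of a poset is compatible when it has an upper bound. -/
def Compatible {α : Type*} [LE α] (X : Set α) : Prop := ∃ y, ∀ x ∈ X, x ≤ y

/-- Binary compatibility. -/
def Compat {α : Type*} [LE α] (x y : α) : Prop := Compatible ({x, y} : Set α)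

/-- A choice set: a pairwise-incompatible set of constraint databases. -/
def IsChoiceSet (𝒞 : Set CDB) : Prop :=
  ∀ D ∈ 𝒞, ∀ E ∈ 𝒞, Compat D E → D = E

/-- The order on choice sets. -/
def ChoiceLE (𝒞₁ 𝒞₂ : Set CDB) : Prop :=
  ∀ D₂ ∈ 𝒞₂, ∃ D₁ ∈ 𝒞₁, D₁ ≤ D₂

/-- Least upper bound of an indexed family of choice sets:
`⋁ᵢ 𝒞ᵢ = { ⋁ Im(f) : f ∈ ∏ᵢ 𝒞ᵢ, Im(f) compatible }`. -/
noncomputable def ChoiceJoin {I : Type*} (𝒞 : I → Set CDB) : Set CDB :=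
  { E | ∃ f : I → CDB, (∀ i, f i ∈ 𝒞 i) ∧ Compatible (Set.range f) ∧
        E = CDB.lub (Set.range f) }

/-- Least upper bound of a set of choice sets. -/
noncomputable def ChoiceSJoin (S : Set (Set CDB)) : Set CDB :=
  ChoiceJoin (fun C : S => (C : Set CDB))

/-- Greatest lower bound of a set of choice sets:
`⋀ X = ⋁ {𝒞 : ∀ x ∈ X, 𝒞 ≤ x}` (join over choice-set lower bounds). -/
noncomputable def ChoiceMeet (S : Set (Set CDB)) : Set CDB :=
  ChoiceSJoin { C | IsChoiceSet C ∧ ∀ X ∈ S, ChoiceLE C X }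

/-! ### Immediate consequence -/

/-- `σ` satisfies `F` in the constraint database `Δ`. -/
def satC (σ : Subst) (F : List VAtom) (Δ : CDB) : Prop :=
  ∀ A ∈ F, Constraint.just (A.value.subst σ) ≤ Δ ⟨A.pred, A.args.map (VTerm.subst σ)⟩

/-- The constraint database mapping `a` to `c` and every other attribute to `noneOf ∅`. -/
noncomputable def unitCDB (a : Attr) (c : Constraint) : CDB :=
  fun a' => if a' = a then c else .noneOf ∅

/-- The choice set `⟨σH⟩` determined by a ground rule head. -/
noncomputable def headChoice (σ : Subst) : Head → Set CDB
  | .opn p args v =>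
      { unitCDB ⟨p, args.map (VTerm.subst σ)⟩ (.just (v.subst σ)),
        unitCDB ⟨p, args.map (VTerm.subst σ)⟩ (.noneOf {v.subst σ}) }
  | .closed p args vs =>
      { Δ | ∃ v ∈ vs, Δ = unitCDB ⟨p, args.map (VTerm.subst σ)⟩ (.just (v.subst σ)) }

/-- The immediate consequence operator
`T_P(Δ) = {Δ} ∨ ⋁{ ⟨σH⟩ : (H ← F) ∈ P, σ satisfies F in Δ }`. -/
noncomputable def TP (P : Program) (Δ : CDB) : Set CDB :=
  ChoiceSJoin
    (insert {Δ} { C | ∃ r ∈ P, ∃ σ : Subst, satC σ r.prems Δ ∧ C = headChoice σ r.head })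

/-- The attribute-specific immediate consequence operator `T_{P[a]}`. -/
noncomputable def TPa (P : Program) (a : Attr) (Δ : CDB) : Set CDB :=
  ChoiceSJoin
    { C | ∃ r ∈ P, ∃ σ : Subst, satC σ r.prems Δ ∧ r.head.groundAttr σ = a ∧
          C = headChoice σ r.head }

/-- The lifted immediate consequence operator `T_P*(𝒞) = ⋃_{Δ ∈ 𝒞} T_P(Δ)`. -/
noncomputable def TPs (P : Program) (𝒞 : Set CDB) : Set CDB :=
  { E | ∃ Δ ∈ 𝒞, E ∈ TP P Δ }

/-- The least fixed point of `T_P*`, defined à la Knaster–Tarski as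
`⋀ {𝒞 : T_P*(𝒞) ≤ 𝒞}`. -/
noncomputable def lfpTPs (P : Program) : Set CDB :=
  ChoiceMeet { C | IsChoiceSet C ∧ ChoiceLE (TPs P C) C }

/-! ### Positive and finite constraint databases, promotion and erasure -/

/-- A constraint database is positive when `noneOf X` only occurs with `X = ∅`. -/
def CDBPositive (Δ : CDB) : Prop := ∀ a X, Δ a = .noneOf X → X = ∅

/-- A constraint database is finite. -/
def CDBFinite (Δ : CDB) : Prop :=
  { a | Δ a ≠ .noneOf ∅ }.Finite ∧ ∀ a X, Δ a = .noneOf X → X.Finite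

/-- Promotion of a (consistent) fact set to a constraint database. -/
noncomputable def promote (D : Set Fact) : CDB :=
  fun a => if h : ∃ v, (⟨a, v⟩ : Fact) ∈ D then .just h.choose else .noneOf ∅

/-- Erasure of a constraint database to a fact set. -/
def eraseCDB (Δ : CDB) : Set Fact := { f | Δ f.attr = .just f.value }

/-! ### The abstract algorithm -/

/-- `P` allows `Δ` to take an algorithmic step to any `Δ' ∈ {Δ} ∨ T_{P[a]}(Δ)`
for some attribute `a`, provided `T_P(Δ) ≠ ∅`. -/
noncomputable def AlgStep (P : Program) (Δ Δ' : CDB) : Prop :=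
  TP P Δ ≠ ∅ ∧ ∃ a : Attr, Δ' ∈ ChoiceSJoin {({Δ} : Set CDB), TPa P a Δ}

/-! ### Datalog -/

/-- A datalog atom, possibly with variables. -/
structure DAtom where
  pred : ℕ
  args : List VTerm

/-- A ground datalog atom. -/
structure GAtom where
  pred : ℕ
  args : List GTerm

def DAtom.subst (σ : Subst) (A : DAtom) : GAtom := ⟨A.pred, A.args.map (VTerm.subst σ)⟩

/-- A datalog rule `p(t̄) ← p₁(t̄₁), ..., pₙ(t̄ₙ)`. -/
structure DRule where
  head : DAtom
  prems : List DAtom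

/-- Every variable of the head appears in a premise. -/
def DRule.WF (r : DRule) : Prop :=
  ∀ x, (∃ t ∈ r.head.args, t.HasVar x) → ∃ A ∈ r.prems, ∃ t ∈ A.args, t.HasVar x

/-- The datalog immediate consequence operator. -/
def dImmCons (P : Set DRule) (X : Set GAtom) : Set GAtom :=
  { g | ∃ r ∈ P, ∃ σ : Subst, (∀ A ∈ r.prems, A.subst σ ∈ X) ∧ g = r.head.subst σ }

/-- The least model of a datalog program: the least fixed point of `dImmCons`. -/
def dModel (P : Set DRule) : Set GAtom := ⋂₀ { X | dImmCons P X ⊆ X }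

/-- Translation of a datalog program to a finite-choice logic program, using the
constant with (fresh) function symbol `u` as the value `unit`. -/
def trDatalog (u : ℕ) (P : Set DRule) : Program :=
  { r | ∃ dr ∈ P,
      r = ⟨Head.closed dr.head.pred dr.head.args [VTerm.func u []],
           dr.prems.map (fun A => ⟨A.pred, A.args, VTerm.func u []⟩)⟩ }

/-! ### Answer set programming -/

/-- A ground ASP rule `p ← p₁,...,pₙ, ¬q₁,...,¬qₘ` over propositional atoms. -/
structure ASPRule where
  head : ℕ
  pos : List ℕ
  neg : List ℕ

/-- One step of the immediate consequence operator of the reduct `P^X`. -/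
def reductCons (P : Set ASPRule) (X : Set ℕ) (Y : Set ℕ) : Set ℕ :=
  { p | ∃ r ∈ P, r.head = p ∧ (∀ q ∈ r.pos, q ∈ Y) ∧ (∀ q ∈ r.neg, q ∉ X) }

/-- The least model of the reduct `P^X`. -/
def reductModel (P : Set ASPRule) (X : Set ℕ) : Set ℕ :=
  ⋂₀ { Y | reductCons P X Y ⊆ Y }

/-- `X` is a stable model of `P` when the least model of the reduct `P^X` equals `X`. -/
def StableModel (P : Set ASPRule) (X : Set ℕ) : Prop := reductModel P X = X

/-- The fresh constant `tt` (as a ground term). -/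
def ttT : GTerm := .func 0 []
/-- The fresh constant `ff` (as a ground term). -/
def ffT : GTerm := .func 1 []
/-- The constant `tt` as a (closed) term of the rule language. -/
def ttV : VTerm := .func 0 []
/-- The constant `ff` as a (closed) term of the rule language. -/
def ffV : VTerm := .func 1 []

/-- The premise `p is tt`. -/
def posPrem (p : ℕ) : VAtom := ⟨p, [], ttV⟩
/-- The premise `q is ff`. -/
def negPrem (q : ℕ) : VAtom := ⟨q, [], ffV⟩

/-- Translation of an ASP program to a finite-choice logic program: each rule
`p ← p₁,...,pₙ, ¬q₁,...,¬qₘ` becomes `m` open rules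
`qⱼ is? ff ← p₁ is tt,...,pₙ is tt, q₁ is ff,...,q_{j-1} is ff` and one closed rule
`p is {tt} ← p₁ is tt,...,pₙ is tt, q₁ is ff,...,qₘ is ff`. -/
def trASP (P : Set ASPRule) : Program :=
  { r | ∃ ar ∈ P,
      (∃ j : Fin ar.neg.length,
        r = ⟨Head.opn (ar.neg.get j) [] ffV,
             ar.pos.map posPrem ++ (ar.neg.take j.val).map negPrem⟩) ∨
      r = ⟨Head.closed ar.head [] [ttV],
           ar.pos.map posPrem ++ ar.neg.map negPrem⟩ }

/-! ### Proof development -/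

section ProofDev

/-! #### Order basics on constraints -/

@[simp] lemma noneOf_le_noneOf {X Y : Set GTerm} :
    (Constraint.noneOf X ≤ Constraint.noneOf Y) ↔ X ⊆ Y := Iff.rfl

@[simp] lemma noneOf_le_just {X : Set GTerm} {t : GTerm} :
    (Constraint.noneOf X ≤ Constraint.just t) ↔ t ∉ X := Iff.rfl

@[simp] lemma just_le_just {t t' : GTerm} :
    (Constraint.just t ≤ Constraint.just t') ↔ t = t' := Iff.rfl

@[simp] lemma just_not_le_noneOf {t : GTerm} {X : Set GTerm} :
    ¬ (Constraint.just t ≤ Constraint.noneOf X) := fun h => h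

lemma just_le_iff {t : GTerm} {c : Constraint} :
    Constraint.just t ≤ c ↔ c = .just t := by
  cases c with
  | just t' => simp [eq_comm]
  | noneOf X => simp

lemma cbot_le (c : Constraint) : Constraint.noneOf ∅ ≤ c := by
  cases c with
  | just t => simp
  | noneOf X => simp

lemma le_cbot_iff {c : Constraint} : c ≤ Constraint.noneOf ∅ ↔ c = .noneOf ∅ := by
  cases c with
  | just t => simp
  | noneOf X => simp [Set.subset_empty_iff]

@[refl] lemma Constraint.le_refl (c : Constraint) : c ≤ c := by
  cases c with
  | just t => rfl
  | noneOf X => exact fun z hz => hz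

lemma Constraint.le_trans {a b c : Constraint} (h1 : a ≤ b) (h2 : b ≤ c) : a ≤ c := by
  cases a with
  | just t =>
    rw [just_le_iff] at h1; subst h1; rwa [just_le_iff] at h2 ⊢
  | noneOf X =>
    cases b with
    | just t => rw [just_le_iff] at h2; subst h2; exact h1
    | noneOf Y =>
      cases c with
      | just t => exact fun hX => h2 (h1 hX)
      | noneOf Z => exact (noneOf_le_noneOf.mpr (h1.trans h2))

lemma Constraint.le_antisymm {a b : Constraint} (h1 : a ≤ b) (h2 : b ≤ a) : a = b := by
  cases a with
  | just t => rw [just_le_iff] at h1; exact h1.symm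
  | noneOf X =>
    cases b with
    | just t => exact absurd h2 (just_not_le_noneOf)
    | noneOf Y => exact congrArg _ (Set.Subset.antisymm h1 h2)

/-! #### Order basics on constraint databases -/

lemma cdb_le_def {Δ Δ' : CDB} : Δ ≤ Δ' ↔ ∀ a, Δ a ≤ Δ' a := Iff.rfl

@[refl] lemma CDB.le_refl (Δ : CDB) : Δ ≤ Δ := fun _ => Constraint.le_refl _

lemma CDB.le_trans {Δ₁ Δ₂ Δ₃ : CDB} (h1 : Δ₁ ≤ Δ₂) (h2 : Δ₂ ≤ Δ₃) : Δ₁ ≤ Δ₃ :=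
  fun a => Constraint.le_trans (h1 a) (h2 a)

lemma CDB.le_antisymm {Δ₁ Δ₂ : CDB} (h1 : Δ₁ ≤ Δ₂) (h2 : Δ₂ ≤ Δ₁) : Δ₁ = Δ₂ :=
  funext fun a => Constraint.le_antisymm (h1 a) (h2 a)

lemma cdbBot_le (Δ : CDB) : cdbBot ≤ Δ := fun a => cbot_le _

/-! #### Compatibility -/

lemma compat_iff {x y : CDB} : Compat x y ↔ ∃ u, x ≤ u ∧ y ≤ u := by
  constructor
  · rintro ⟨u, hu⟩
    exact ⟨u, hu x (by simp), hu y (by simp)⟩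
  · rintro ⟨u, hx, hy⟩
    exact ⟨u, by rintro z (rfl | rfl) <;> assumption⟩

lemma compat_of_le {x y u : CDB} (hx : x ≤ u) (hy : y ≤ u) : Compat x y :=
  compat_iff.mpr ⟨u, hx, hy⟩

/-! #### Least upper bounds of constraints -/

lemma Constraint.lub_le {C : Set Constraint} {u : Constraint}
    (hu : ∀ c ∈ C, c ≤ u) : Constraint.lub C ≤ u := by
  unfold Constraint.lub
  split
  · next h => exact hu _ h.choose_spec
  · next h =>
    cases u with
    | just t =>
      intro ht
      obtain ⟨X, hX, htX⟩ := ht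
      exact (noneOf_le_just.mp (hu _ hX)) htX
    | noneOf Y =>
      simp only [noneOf_le_noneOf, Set.sUnion_subset_iff]
      exact fun X hX => noneOf_le_noneOf.mp (hu _ hX)

lemma Constraint.le_lub {C : Set Constraint} {u : Constraint}
    (hu : ∀ c ∈ C, c ≤ u) : ∀ c ∈ C, c ≤ Constraint.lub C := by
  intro c hc
  unfold Constraint.lub
  split
  · next h =>
    have h1 : Constraint.just h.choose ∈ C := h.choose_spec
    have h2 := (just_le_iff.mp (hu _ h1))
    subst h2
    exact hu c hc
  · next h =>
    cases c with
    | just t => exact absurd ⟨t, hc⟩ h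
    | noneOf X => exact noneOf_le_noneOf.mpr (fun z hz => ⟨X, hc, hz⟩)

lemma Constraint.lub_attained {C : Set Constraint} {u : Constraint}
    (huC : u ∈ C) (hu : ∀ c ∈ C, c ≤ u) : Constraint.lub C = u :=
  Constraint.le_antisymm (Constraint.lub_le hu) (Constraint.le_lub hu u huC)

lemma Constraint.lub_bot {C : Set Constraint}
    (h : ∀ c ∈ C, c = .noneOf ∅) : Constraint.lub C = .noneOf ∅ := by
  unfold Constraint.lub
  split
  · next hj => exact absurd (h _ hj.choose_spec) (by simp)
  · next hj =>
    congr 1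
    simp only [Set.sUnion_eq_empty, Set.mem_setOf_eq]
    intro X hX
    have := h _ hX
    exact (Constraint.noneOf.injEq _ _ ▸ this)

lemma Constraint.lub_just {C : Set Constraint} {t : GTerm}
    (h : Constraint.lub C = .just t) : Constraint.just t ∈ C := by
  unfold Constraint.lub at h
  split at h
  · next hj =>
    obtain ⟨rfl⟩ := h
    exact hj.choose_spec
  · exact absurd h (by simp)

/-! #### Least upper bounds of constraint databases -/

lemma CDB.lub_le {S : Set CDB} {u : CDB} (hu : ∀ Δ ∈ S, Δ ≤ u) : CDB.lub S ≤ u := by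
  intro a
  exact Constraint.lub_le (by rintro c ⟨Δ, hΔ, rfl⟩; exact hu Δ hΔ a)

lemma CDB.le_lub {S : Set CDB} (hS : Compatible S) : ∀ Δ ∈ S, Δ ≤ CDB.lub S := by
  obtain ⟨u, hu⟩ := hS
  intro Δ hΔ a
  exact Constraint.le_lub (by rintro c ⟨Δ', hΔ', rfl⟩; exact hu Δ' hΔ' a) _ ⟨Δ, hΔ, rfl⟩

lemma CDB.lub_attained {S : Set CDB} {u : CDB} (huS : u ∈ S) (hu : ∀ Δ ∈ S, Δ ≤ u) :
    CDB.lub S = u :=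
  CDB.le_antisymm (CDB.lub_le hu) (CDB.le_lub ⟨u, hu⟩ u huS)

/-! #### Choice-set joins -/

lemma mem_sjoin_iff {S : Set (Set CDB)} {E : CDB} :
    E ∈ ChoiceSJoin S ↔ ∃ f : S → CDB, (∀ i : S, f i ∈ i.1) ∧
      Compatible (Set.range f) ∧ E = CDB.lub (Set.range f) := Iff.rfl

lemma sjoin_pick {S : Set (Set CDB)} {E : CDB} (hE : E ∈ ChoiceSJoin S) {C : Set CDB}
    (hC : C ∈ S) : ∃ e ∈ C, e ≤ E := by
  obtain ⟨f, hf, hcomp, rfl⟩ := mem_sjoin_iff.mp hE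
  exact ⟨f ⟨C, hC⟩, hf ⟨C, hC⟩, CDB.le_lub hcomp _ (Set.mem_range_self _)⟩

lemma mem_sjoin_le {S : Set (Set CDB)} {u : CDB} (h : ∀ C ∈ S, ∃ c ∈ C, c ≤ u) :
    ∃ E ∈ ChoiceSJoin S, E ≤ u := by
  refine ⟨CDB.lub (Set.range (fun i : S => (h i.1 i.2).choose)),
    mem_sjoin_iff.mpr ⟨_, fun i => (h i.1 i.2).choose_spec.1, ?_, rfl⟩, ?_⟩
  · exact ⟨u, by rintro x ⟨i, rfl⟩; exact (h i.1 i.2).choose_spec.2⟩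
  · exact CDB.lub_le (by rintro x ⟨i, rfl⟩; exact (h i.1 i.2).choose_spec.2)

lemma mem_sjoin_self {S : Set (Set CDB)} {u : CDB}
    (h : ∀ C ∈ S, ∃ c ∈ C, c ≤ u) (h2 : ∃ C₀ ∈ S, u ∈ C₀) : u ∈ ChoiceSJoin S := by
  have key : ∀ C ∈ S, ∃ c, c ∈ C ∧ c ≤ u ∧ (u ∈ C → c = u) := by
    intro C hC
    by_cases hu : u ∈ C
    · exact ⟨u, hu, CDB.le_refl u, fun _ => rfl⟩
    · obtain ⟨c, hc, hcu⟩ := h C hC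
      exact ⟨c, hc, hcu, fun h' => absurd h' hu⟩
  refine mem_sjoin_iff.mpr ⟨fun i : S => (key i.1 i.2).choose,
    fun i => (key i.1 i.2).choose_spec.1,
    ⟨u, by rintro x ⟨i, rfl⟩; exact (key i.1 i.2).choose_spec.2.1⟩, ?_⟩
  obtain ⟨C₀, hC₀, huC₀⟩ := h2
  have hval : (key C₀ hC₀).choose = u := (key C₀ hC₀).choose_spec.2.2 huC₀
  exact (CDB.lub_attained (Set.mem_range.mpr ⟨⟨C₀, hC₀⟩, hval⟩)
    (by rintro x ⟨i, rfl⟩; exact (key i.1 i.2).choose_spec.2.1)).symm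

lemma sjoin_isChoiceSet {S : Set (Set CDB)} (h : ∀ C ∈ S, IsChoiceSet C) :
    IsChoiceSet (ChoiceSJoin S) := by
  intro E hE E' hE' hcompat
  obtain ⟨f, hf, hcomp, rfl⟩ := mem_sjoin_iff.mp hE
  obtain ⟨f', hf', hcomp', rfl⟩ := mem_sjoin_iff.mp hE'
  obtain ⟨U, hU1, hU2⟩ := compat_iff.mp hcompat
  have hff : f = f' := funext fun i => h i.1 i.2 _ (hf i) _ (hf' i)
    (compat_of_le (CDB.le_trans (CDB.le_lub hcomp _ (Set.mem_range_self i)) hU1)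
      (CDB.le_trans (CDB.le_lub hcomp' _ (Set.mem_range_self i)) hU2))
  rw [hff]

lemma choiceLE_sjoin {S : Set (Set CDB)} {C : Set CDB} (hC : C ∈ S) :
    ChoiceLE C (ChoiceSJoin S) :=
  fun _ hE => sjoin_pick hE hC

lemma sjoin_choiceLE {S : Set (Set CDB)} {X : Set CDB} (h : ∀ C ∈ S, ChoiceLE C X) :
    ChoiceLE (ChoiceSJoin S) X :=
  fun E' hE' => mem_sjoin_le (fun C hC => h C hC E' hE')

lemma choiceLE_trans {A B C : Set CDB} (h1 : ChoiceLE A B) (h2 : ChoiceLE B C) :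
    ChoiceLE A C := by
  intro D hD
  obtain ⟨e, he, hle⟩ := h2 D hD
  obtain ⟨e', he', hle'⟩ := h1 e he
  exact ⟨e', he', CDB.le_trans hle' hle⟩

/-! #### Head choices -/

lemma unitCDB_apply_self {a : Attr} {k : Constraint} : unitCDB a k a = k := by
  simp [unitCDB]

lemma unitCDB_apply_ne {a a' : Attr} {k : Constraint} (h : a' ≠ a) :
    unitCDB a k a' = .noneOf ∅ := by
  simp [unitCDB, h]

lemma unitCDB_le_iff {a : Attr} {k : Constraint} {Δ : CDB} :
    unitCDB a k ≤ Δ ↔ k ≤ Δ a := by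
  constructor
  · intro h
    have := h a
    rwa [unitCDB_apply_self] at this
  · intro h a'
    by_cases ha : a' = a
    · subst ha; rwa [unitCDB_apply_self]
    · rw [unitCDB_apply_ne ha]; exact cbot_le _

lemma headChoice_unit {σ : Subst} {h : Head} {c : CDB} (hc : c ∈ headChoice σ h) :
    ∃ k, c = unitCDB (h.groundAttr σ) k := by
  cases h with
  | opn p args v =>
    rcases hc with rfl | rfl
    · exact ⟨_, rfl⟩
    · exact ⟨_, rfl⟩
  | closed p args vs =>
    obtain ⟨v, _, rfl⟩ := hc
    exact ⟨_, rfl⟩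

lemma head_decided {σ : Subst} {h : Head} {c d D : CDB}
    (hc : c ∈ headChoice σ h) (hd : d ∈ headChoice σ h)
    (hcD : c ≤ D) (hcompat : Compat d D) : d ≤ D := by
  obtain ⟨U, hdU, hDU⟩ := compat_iff.mp hcompat
  cases h with
  | opn p args v =>
    set a : Attr := ⟨p, args.map (VTerm.subst σ)⟩ with ha
    set tv : GTerm := VTerm.subst σ v with htv
    rcases hc with rfl | rfl <;> rcases hd with rfl | rfl
    · exact hcD
    · -- c = just, d = noneOf
      exfalso
      have h1 : D a = .just tv := just_le_iff.mp (unitCDB_le_iff.mp hcD)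
      have h2 : U a = .just tv := just_le_iff.mp (h1 ▸ hDU a)
      have h3 : Constraint.noneOf {tv} ≤ U a := unitCDB_le_iff.mp hdU
      rw [h2] at h3
      exact (noneOf_le_just.mp h3) rfl
    · -- c = noneOf, d = just
      exfalso
      have h1 : Constraint.noneOf {tv} ≤ D a := unitCDB_le_iff.mp hcD
      have h2 : U a = .just tv := just_le_iff.mp (unitCDB_le_iff.mp hdU)
      have h3 : D a ≤ .just tv := h2 ▸ hDU a
      cases hDa : D a with
      | just s =>
        rw [hDa] at h1 h3
        exact (noneOf_le_just.mp h1) (Set.mem_singleton_iff.mpr (just_le_just.mp h3))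
      | noneOf X =>
        rw [hDa] at h1 h3
        exact (noneOf_le_just.mp h3) (noneOf_le_noneOf.mp h1 rfl)
    · exact hcD
  | closed p args vs =>
    set a : Attr := ⟨p, args.map (VTerm.subst σ)⟩ with ha
    obtain ⟨vi, _, rfl⟩ := hc
    obtain ⟨vj, _, rfl⟩ := hd
    have h1 : D a = .just (VTerm.subst σ vi) := just_le_iff.mp (unitCDB_le_iff.mp hcD)
    have h2 : U a = .just (VTerm.subst σ vj) := just_le_iff.mp (unitCDB_le_iff.mp hdU)
    have h3 : U a = .just (VTerm.subst σ vi) := just_le_iff.mp (h1 ▸ hDU a)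
    have : VTerm.subst σ vj = VTerm.subst σ vi := Constraint.just.inj (h2.symm.trans h3)
    rw [unitCDB_le_iff, this, h1]

lemma headChoice_isChoiceSet {σ : Subst} {h : Head} : IsChoiceSet (headChoice σ h) := by
  intro c hc d hd hcompat
  obtain ⟨U, hcU, hdU⟩ := compat_iff.mp hcompat
  cases h with
  | opn p args v =>
    set a : Attr := ⟨p, args.map (VTerm.subst σ)⟩ with ha
    set tv : GTerm := VTerm.subst σ v with htv
    rcases hc with rfl | rfl <;> rcases hd with rfl | rfl
    · rfl
    · exfalso
      have h1 : U a = .just tv := just_le_iff.mp (unitCDB_le_iff.mp hcU)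
      have h2 : Constraint.noneOf {tv} ≤ U a := unitCDB_le_iff.mp hdU
      rw [h1] at h2
      exact (noneOf_le_just.mp h2) rfl
    · exfalso
      have h1 : U a = .just tv := just_le_iff.mp (unitCDB_le_iff.mp hdU)
      have h2 : Constraint.noneOf {tv} ≤ U a := unitCDB_le_iff.mp hcU
      rw [h1] at h2
      exact (noneOf_le_just.mp h2) rfl
    · rfl
  | closed p args vs =>
    set a : Attr := ⟨p, args.map (VTerm.subst σ)⟩ with ha
    obtain ⟨vi, _, rfl⟩ := hc
    obtain ⟨vj, _, rfl⟩ := hd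
    have h1 : U a = .just (VTerm.subst σ vi) := just_le_iff.mp (unitCDB_le_iff.mp hcU)
    have h2 : U a = .just (VTerm.subst σ vj) := just_le_iff.mp (unitCDB_le_iff.mp hdU)
    rw [h1] at h2
    rw [Constraint.just.injEq] at h2
    rw [h2]

/-! #### The immediate-consequence operator -/

/-- The set of head choice sets of rules applicable in `Δ`. -/
def Hset (P : Program) (Δ : CDB) : Set (Set CDB) :=
  { C | ∃ r ∈ P, ∃ σ : Subst, satC σ r.prems Δ ∧ C = headChoice σ r.head }

/-- The set of head choice sets of rules applicable in `Δ` with head attribute `a`. -/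
def TPaSet (P : Program) (a : Attr) (Δ : CDB) : Set (Set CDB) :=
  { C | ∃ r ∈ P, ∃ σ : Subst, satC σ r.prems Δ ∧ r.head.groundAttr σ = a ∧
        C = headChoice σ r.head }

lemma TP_eq (P : Program) (Δ : CDB) :
    TP P Δ = ChoiceSJoin (insert {Δ} (Hset P Δ)) := rfl

lemma TPa_eq (P : Program) (a : Attr) (Δ : CDB) :
    TPa P a Δ = ChoiceSJoin (TPaSet P a Δ) := rfl

lemma lfp_eq (P : Program) :
    lfpTPs P = ChoiceSJoin
      { C | IsChoiceSet C ∧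
        ∀ X ∈ { C | IsChoiceSet C ∧ ChoiceLE (TPs P C) C }, ChoiceLE C X } := rfl

/-- The set of prefixed points of `T_P*`. -/
def PreFix (P : Program) : Set (Set CDB) := { C | IsChoiceSet C ∧ ChoiceLE (TPs P C) C }

/-- The set of choice-set lower bounds of all prefixed points. -/
def Lset (P : Program) : Set (Set CDB) :=
  { C | IsChoiceSet C ∧ ∀ X ∈ PreFix P, ChoiceLE C X }

lemma lfp_eq' (P : Program) : lfpTPs P = ChoiceSJoin (Lset P) := rfl

lemma Hset_isChoiceSet {P : Program} {Δ : CDB} {C : Set CDB} (hC : C ∈ Hset P Δ) :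
    IsChoiceSet C := by
  obtain ⟨r, _, σ, _, rfl⟩ := hC
  exact headChoice_isChoiceSet

lemma singleton_isChoiceSet {Δ : CDB} : IsChoiceSet ({Δ} : Set CDB) := by
  intro x hx y hy _
  rw [Set.mem_singleton_iff.mp hx, Set.mem_singleton_iff.mp hy]

lemma satC_mono {σ : Subst} {F : List VAtom} {Δ Δ' : CDB} (hΔ : Δ ≤ Δ')
    (h : satC σ F Δ) : satC σ F Δ' :=
  fun A hA => Constraint.le_trans (h A hA) (hΔ _)

lemma Hset_mono {P : Program} {Δ Δ' : CDB} (hΔ : Δ ≤ Δ') : Hset P Δ ⊆ Hset P Δ' := by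
  rintro C ⟨r, hr, σ, hsat, rfl⟩
  exact ⟨r, hr, σ, satC_mono hΔ hsat, rfl⟩

lemma TPaSet_subset {P : Program} {a : Attr} {Δ : CDB} : TPaSet P a Δ ⊆ Hset P Δ := by
  rintro C ⟨r, hr, σ, hsat, _, rfl⟩
  exact ⟨r, hr, σ, hsat, rfl⟩

lemma TP_elt_ge {P : Program} {Δ E : CDB} (hE : E ∈ TP P Δ) : Δ ≤ E := by
  obtain ⟨e, he, hle⟩ := sjoin_pick hE (Set.mem_insert {Δ} _)
  rwa [Set.mem_singleton_iff.mp he] at hle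

lemma TP_isChoiceSet {P : Program} {Δ : CDB} : IsChoiceSet (TP P Δ) := by
  apply sjoin_isChoiceSet
  intro C hC
  rcases Set.mem_insert_iff.mp hC with rfl | hC
  · exact singleton_isChoiceSet
  · exact Hset_isChoiceSet hC

lemma star_of_mem_TP_self {P : Program} {Δ : CDB} (h : Δ ∈ TP P Δ) :
    ∀ C ∈ Hset P Δ, ∃ c ∈ C, c ≤ Δ :=
  fun _ hC => sjoin_pick h (Set.mem_insert_of_mem _ hC)

lemma TP_eq_singleton_of_star {P : Program} {Δ : CDB}
    (hstar : ∀ C ∈ Hset P Δ, ∃ c ∈ C, c ≤ Δ) : TP P Δ = {Δ} := by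
  apply Set.eq_singleton_iff_unique_mem.mpr
  constructor
  · refine mem_sjoin_self ?_ ⟨{Δ}, Set.mem_insert _ _, rfl⟩
    intro C hC
    rcases Set.mem_insert_iff.mp hC with rfl | hC
    · exact ⟨Δ, rfl, CDB.le_refl Δ⟩
    · exact hstar C hC
  · intro E hE
    have hΔE : Δ ≤ E := TP_elt_ge hE
    obtain ⟨f, hf, hcomp, rfl⟩ := mem_sjoin_iff.mp hE
    refine CDB.le_antisymm ?_ hΔE
    apply CDB.lub_le
    rintro x ⟨i, rfl⟩
    rcases Set.mem_insert_iff.mp i.2 with hi | hi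
    · have : f i ∈ ({Δ} : Set CDB) := hi ▸ hf i
      rw [Set.mem_singleton_iff.mp this]
    · obtain ⟨r, hr, σ, hsat, hC⟩ := hi
      obtain ⟨c, hc, hcΔ⟩ := hstar i.1 ⟨r, hr, σ, hsat, hC⟩
      have hfi : f i ∈ headChoice σ r.head := hC ▸ hf i
      have hcH : c ∈ headChoice σ r.head := hC ▸ hc
      exact head_decided hcH hfi hcΔ
        (compat_of_le (CDB.le_lub hcomp _ (Set.mem_range_self i)) hΔE)

lemma prefixed_elt_saturated {P : Program} {X : Set CDB} {D : CDB}
    (hX : IsChoiceSet X) (hpre : ChoiceLE (TPs P X) X) (hD : D ∈ X) :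
    TP P D = {D} := by
  obtain ⟨E, hE, hED⟩ := hpre D hD
  obtain ⟨Δ₀, hΔ₀, hE'⟩ := hE
  have h1 : Δ₀ ≤ E := TP_elt_ge hE'
  have h2 : Δ₀ = D :=
    hX Δ₀ hΔ₀ D hD (compat_of_le (CDB.le_trans h1 hED) (CDB.le_refl D))
  subst h2
  have hDE : E = Δ₀ := CDB.le_antisymm hED h1
  exact TP_eq_singleton_of_star (star_of_mem_TP_self (hDE ▸ hE'))

lemma singleton_mem_PreFix {P : Program} {Δ : CDB} (hsat : TP P Δ = {Δ}) :
    ({Δ} : Set CDB) ∈ PreFix P := by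
  refine ⟨singleton_isChoiceSet, ?_⟩
  intro D hD
  rw [Set.mem_singleton_iff.mp hD]
  refine ⟨Δ, ⟨Δ, Set.mem_singleton_iff.mpr rfl, ?_⟩, CDB.le_refl Δ⟩
  rw [hsat]
  exact Set.mem_singleton_iff.mpr rfl

lemma TPs_isChoiceSet {P : Program} {C : Set CDB} (hC : IsChoiceSet C) :
    IsChoiceSet (TPs P C) := by
  rintro E ⟨Δ₁, h₁, hE⟩ E' ⟨Δ₂, h₂, hE'⟩ hcompat
  obtain ⟨U, hU1, hU2⟩ := compat_iff.mp hcompat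
  have h12 : Δ₁ = Δ₂ := hC _ h₁ _ h₂
    (compat_of_le (CDB.le_trans (TP_elt_ge hE) hU1) (CDB.le_trans (TP_elt_ge hE') hU2))
  subst h12
  exact TP_isChoiceSet _ hE _ hE' hcompat

lemma TPs_mono {P : Program} {C C' : Set CDB} (h : ChoiceLE C C') :
    ChoiceLE (TPs P C) (TPs P C') := by
  rintro E' ⟨Δ', hΔ', hE'⟩
  obtain ⟨Δ, hΔ, hle⟩ := h Δ' hΔ'
  have hpicks : ∀ C₁ ∈ insert {Δ} (Hset P Δ), ∃ c ∈ C₁, c ≤ E' := by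
    intro C₁ hC₁
    rcases Set.mem_insert_iff.mp hC₁ with rfl | hC₁
    · exact ⟨Δ, rfl, CDB.le_trans hle (TP_elt_ge hE')⟩
    · exact sjoin_pick hE' (Set.mem_insert_of_mem _ (Hset_mono hle hC₁))
  obtain ⟨E, hE, hEle⟩ := mem_sjoin_le hpicks
  exact ⟨E, ⟨Δ, hΔ, hE⟩, hEle⟩

lemma lfp_isChoiceSet {P : Program} : IsChoiceSet (lfpTPs P) :=
  sjoin_isChoiceSet (fun _ hC => hC.1)

lemma lfp_prefixed {P : Program} : ChoiceLE (TPs P (lfpTPs P)) (lfpTPs P) := by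
  have hmem : TPs P (lfpTPs P) ∈ Lset P := by
    refine ⟨TPs_isChoiceSet lfp_isChoiceSet, ?_⟩
    intro X hX
    have h1 : ChoiceLE (lfpTPs P) X := sjoin_choiceLE (fun C hC => hC.2 X hX)
    exact choiceLE_trans (TPs_mono h1) hX.2
  exact choiceLE_sjoin hmem

lemma saturated_of_mem_lfp {P : Program} {Δ : CDB} (h : Δ ∈ lfpTPs P) :
    TP P Δ = {Δ} :=
  prefixed_elt_saturated lfp_isChoiceSet lfp_prefixed h

/-! #### Algorithmic steps -/

lemma compat_symm {x y : CDB} (h : Compat x y) : Compat y x := by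
  obtain ⟨u, h1, h2⟩ := compat_iff.mp h
  exact compat_of_le h2 h1

lemma CDB.lub_apply {S : Set CDB} {a : Attr} :
    CDB.lub S a = Constraint.lub ((fun Δ => Δ a) '' S) := rfl

lemma TPa_isChoiceSet {P : Program} {a : Attr} {Δ : CDB} : IsChoiceSet (TPa P a Δ) := by
  apply sjoin_isChoiceSet
  rintro C ⟨r, _, σ, _, _, rfl⟩
  exact headChoice_isChoiceSet

lemma step_ge {P : Program} {a : Attr} {Δ₀ Δ' : CDB}
    (h : Δ' ∈ ChoiceSJoin {({Δ₀} : Set CDB), TPa P a Δ₀}) : Δ₀ ≤ Δ' := by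
  obtain ⟨e, he, hle⟩ := sjoin_pick h (Set.mem_insert _ _)
  rwa [Set.mem_singleton_iff.mp he] at hle

lemma step_isChoiceSet {P : Program} {a : Attr} {Δ₀ : CDB} :
    IsChoiceSet (ChoiceSJoin {({Δ₀} : Set CDB), TPa P a Δ₀}) := by
  apply sjoin_isChoiceSet
  intro C hC
  rcases Set.mem_insert_iff.mp hC with rfl | hC
  · exact singleton_isChoiceSet
  · rw [Set.mem_singleton_iff.mp hC]
    exact TPa_isChoiceSet

lemma mem_TP_of_sat {P : Program} {D : CDB} (hD : TP P D = {D}) : D ∈ TP P D := by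
  rw [hD]; exact Set.mem_singleton_iff.mpr rfl

lemma TPa_elt_le {P : Program} {a : Attr} {Δ₀ D E U : CDB} (hD : TP P D = {D})
    (hΔ₀D : Δ₀ ≤ D) (hE : E ∈ TPa P a Δ₀) (hEU : E ≤ U) (hDU : D ≤ U) : E ≤ D := by
  obtain ⟨f, hf, hcomp, rfl⟩ := mem_sjoin_iff.mp hE
  apply CDB.lub_le
  rintro x ⟨i, rfl⟩
  obtain ⟨r, hr, σ, hsat, _, hC⟩ := i.2
  have hCH : i.1 ∈ Hset P D := ⟨r, hr, σ, satC_mono hΔ₀D hsat, hC⟩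
  obtain ⟨c, hc, hcD⟩ := star_of_mem_TP_self (mem_TP_of_sat hD) i.1 hCH
  have hfi : f i ∈ headChoice σ r.head := hC ▸ hf i
  have hcH : c ∈ headChoice σ r.head := hC ▸ hc
  refine head_decided hcH hfi hcD (compat_of_le ?_ hDU)
  exact CDB.le_trans (CDB.le_lub hcomp _ (Set.mem_range_self i)) hEU

lemma TPa_elt_apply_ne {P : Program} {a a' : Attr} {Δ₀ E : CDB}
    (hE : E ∈ TPa P a Δ₀) (ha' : a' ≠ a) : E a' = .noneOf ∅ := by
  obtain ⟨f, hf, _, rfl⟩ := mem_sjoin_iff.mp hE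
  rw [CDB.lub_apply]
  apply Constraint.lub_bot
  rintro c ⟨x, ⟨i, rfl⟩, rfl⟩
  obtain ⟨r, hr, σ, hsat, hattr, hC⟩ := i.2
  obtain ⟨k, hk⟩ := headChoice_unit (hC ▸ hf i)
  show f i a' = _
  rw [hk, hattr]
  exact unitCDB_apply_ne ha'

lemma step_apply_ne {P : Program} {a a' : Attr} {Δ₀ Δ' : CDB}
    (h : Δ' ∈ ChoiceSJoin {({Δ₀} : Set CDB), TPa P a Δ₀}) (ha' : a' ≠ a) :
    Δ' a' = Δ₀ a' := by
  obtain ⟨f, hf, hcomp, rfl⟩ := mem_sjoin_iff.mp h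
  rw [CDB.lub_apply]
  apply Constraint.lub_attained
  · refine ⟨f ⟨{Δ₀}, Set.mem_insert _ _⟩, Set.mem_range_self _, ?_⟩
    rw [Set.mem_singleton_iff.mp (hf ⟨{Δ₀}, Set.mem_insert _ _⟩)]
  · rintro c ⟨x, ⟨i, rfl⟩, rfl⟩
    rcases Set.mem_insert_iff.mp i.2 with hi | hi
    · have : f i ∈ ({Δ₀} : Set CDB) := hi ▸ hf i
      rw [Set.mem_singleton_iff.mp this]
    · have hfi : f i ∈ TPa P a Δ₀ := (Set.mem_singleton_iff.mp hi) ▸ hf i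
      show f i a' ≤ Δ₀ a'
      rw [TPa_elt_apply_ne hfi ha']
      exact cbot_le _

lemma step_le {P : Program} {a : Attr} {Δ₀ D Δ' : CDB} (hD : TP P D = {D})
    (hΔ₀D : Δ₀ ≤ D) (h : Δ' ∈ ChoiceSJoin {({Δ₀} : Set CDB), TPa P a Δ₀})
    (hcompat : Compat Δ' D) : Δ' ≤ D := by
  obtain ⟨U, hU1, hU2⟩ := compat_iff.mp hcompat
  obtain ⟨f, hf, hcomp, rfl⟩ := mem_sjoin_iff.mp h
  apply CDB.lub_le
  rintro x ⟨i, rfl⟩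
  rcases Set.mem_insert_iff.mp i.2 with hi | hi
  · have : f i ∈ ({Δ₀} : Set CDB) := hi ▸ hf i
    rw [Set.mem_singleton_iff.mp this]
    exact hΔ₀D
  · have hfi : f i ∈ TPa P a Δ₀ := (Set.mem_singleton_iff.mp hi) ▸ hf i
    refine TPa_elt_le hD hΔ₀D hfi ?_ hU2
    exact CDB.le_trans (CDB.le_lub hcomp _ (Set.mem_range_self i)) hU1

lemma reachable_below_saturated {P : Program} {Δ₀ : CDB}
    (h : Relation.ReflTransGen (AlgStep P) cdbBot Δ₀) :
    ∀ D, TP P D = {D} → Compat Δ₀ D → Δ₀ ≤ D := by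
  induction h with
  | refl => exact fun D _ _ => cdbBot_le D
  | tail _ hstep ih =>
    intro D hD hcompat
    obtain ⟨-, a, hmem⟩ := hstep
    have h1 := step_ge hmem
    obtain ⟨U, hU1, hU2⟩ := compat_iff.mp hcompat
    have hcompat' := compat_of_le (CDB.le_trans h1 hU1) hU2
    exact step_le hD (ih D hD hcompat') hmem hcompat

lemma reachable_supp {P : Program} {Δ₀ : CDB}
    (h : Relation.ReflTransGen (AlgStep P) cdbBot Δ₀) :
    {a | Δ₀ a ≠ .noneOf ∅}.Finite := by
  induction h with
  | refl =>
    have : {a | cdbBot a ≠ Constraint.noneOf ∅} = ∅ := by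
      ext a; simp [cdbBot]
    rw [this]; exact Set.finite_empty
  | tail _ hstep ih =>
    obtain ⟨-, a, hmem⟩ := hstep
    apply Set.Finite.subset (ih.union (Set.finite_singleton a))
    intro a' ha'
    by_cases haa : a' = a
    · exact Or.inr (Set.mem_singleton_iff.mpr haa)
    · exact Or.inl (by rw [Set.mem_setOf_eq, step_apply_ne hmem haa] at ha'; exact ha')

lemma exists_step_below {P : Program} {a : Attr} {Δ₀ D : CDB} (hD : TP P D = {D})
    (hle : Δ₀ ≤ D) :
    ∃ A ∈ ChoiceSJoin {({Δ₀} : Set CDB), TPa P a Δ₀}, A ≤ D := by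
  apply mem_sjoin_le
  intro C hC
  rcases Set.mem_insert_iff.mp hC with rfl | hC
  · exact ⟨Δ₀, Set.mem_singleton_iff.mpr rfl, hle⟩
  · rw [Set.mem_singleton_iff.mp hC]
    apply mem_sjoin_le
    intro C' hC'
    exact star_of_mem_TP_self (mem_TP_of_sat hD) C' (Hset_mono hle (TPaSet_subset hC'))

lemma exists_C0 {P : Program} {Δ : CDB}
    (h : Relation.ReflTransGen (AlgStep P) cdbBot Δ) :
    ∃ C₀ : Set CDB, IsChoiceSet C₀ ∧ (∀ D, TP P D = {D} → ∃ e ∈ C₀, e ≤ D) ∧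
      Δ ∈ C₀ ∧ ∀ A ∈ C₀, A ≠ Δ → ¬ Compat A Δ := by
  induction h with
  | refl =>
    refine ⟨{cdbBot}, singleton_isChoiceSet,
      fun D _ => ⟨cdbBot, Set.mem_singleton_iff.mpr rfl, cdbBot_le D⟩,
      Set.mem_singleton_iff.mpr rfl, ?_⟩
    intro A hA hne
    exact absurd (Set.mem_singleton_iff.mp hA) hne
  | @tail Δ₁ Δ₂ _ hstep ih =>
    obtain ⟨C₀, hcs, hcov, hmem, htail⟩ := ih
    obtain ⟨-, a, hmem₂⟩ := hstep
    have h12 : Δ₁ ≤ Δ₂ := step_ge hmem₂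
    -- key facts
    have fact1 : ∀ A ∈ C₀, A ≠ Δ₁ → ¬ Compat A Δ₂ := by
      intro A hA hne hcompat
      obtain ⟨U, hU1, hU2⟩ := compat_iff.mp hcompat
      exact htail A hA hne (compat_of_le hU1 (CDB.le_trans h12 hU2))
    have fact2 : ∀ A ∈ ChoiceSJoin {({Δ₁} : Set CDB), TPa P a Δ₁}, Compat A Δ₂ → A = Δ₂ :=
      fun A hA hc => step_isChoiceSet A hA Δ₂ hmem₂ hc
    have fact3 : ∀ A ∈ C₀, A ≠ Δ₁ →
        ∀ B ∈ ChoiceSJoin {({Δ₁} : Set CDB), TPa P a Δ₁}, ¬ Compat A B := by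
      intro A hA hne B hB hcompat
      obtain ⟨U, hU1, hU2⟩ := compat_iff.mp hcompat
      exact htail A hA hne (compat_of_le hU1 (CDB.le_trans (step_ge hB) hU2))
    refine ⟨insert Δ₂ ((C₀ \ {Δ₁}) ∪
      {A ∈ ChoiceSJoin {({Δ₁} : Set CDB), TPa P a Δ₁} | ¬ Compat A Δ₂}), ?_, ?_, ?_, ?_⟩
    · -- choice set
      intro x hx y hy hcompat
      rcases Set.mem_insert_iff.mp hx with rfl | hx <;>
        rcases Set.mem_insert_iff.mp hy with h' | hy
      · exact h'.symm
      · rcases hy with ⟨hy1, hy2⟩ | ⟨hy1, hy2⟩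
        · exact absurd (compat_symm hcompat) (fact1 y hy1 (fun h => hy2 (Set.mem_singleton_iff.mpr h)))
        · exact absurd (compat_symm hcompat) hy2
      · subst h'
        rcases hx with ⟨hx1, hx2⟩ | ⟨hx1, hx2⟩
        · exact absurd hcompat (fact1 x hx1 (fun h => hx2 (Set.mem_singleton_iff.mpr h)))
        · exact absurd hcompat hx2
      · rcases hx with ⟨hx1, hx2⟩ | ⟨hx1, hx2⟩ <;> rcases hy with ⟨hy1, hy2⟩ | ⟨hy1, hy2⟩
        · exact hcs x hx1 y hy1 hcompat
        · exact absurd hcompat (fact3 x hx1 (fun h => hx2 (Set.mem_singleton_iff.mpr h)) y hy1)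
        · exact absurd (compat_symm hcompat) (fact3 y hy1 (fun h => hy2 (Set.mem_singleton_iff.mpr h)) x hx1)
        · exact step_isChoiceSet x hx1 y hy1 hcompat
    · -- covering
      intro D hD
      obtain ⟨e, he, hle⟩ := hcov D hD
      by_cases hne : e = Δ₁
      · subst hne
        obtain ⟨A, hA, hAD⟩ := exists_step_below (a := a) hD hle
        by_cases hc : Compat A Δ₂
        · refine ⟨Δ₂, Set.mem_insert _ _, ?_⟩
          rw [← fact2 A hA hc]; exact hAD
        · exact ⟨A, Set.mem_insert_of_mem _ (Or.inr ⟨hA, hc⟩), hAD⟩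
      · exact ⟨e, Set.mem_insert_of_mem _ (Or.inl ⟨he, fun h => hne (Set.mem_singleton_iff.mp h)⟩), hle⟩
    · exact Set.mem_insert _ _
    · -- tail invariant
      intro A hA hne
      rcases Set.mem_insert_iff.mp hA with rfl | hA
      · exact absurd rfl hne
      · rcases hA with ⟨hA1, hA2⟩ | ⟨hA1, hA2⟩
        · exact fact1 A hA1 (fun h => hA2 (Set.mem_singleton_iff.mpr h))
        · exact hA2

lemma mem_lfp_of_reachable_saturated {P : Program} {Δ : CDB}
    (hreach : Relation.ReflTransGen (AlgStep P) cdbBot Δ) (hsat : TP P Δ = {Δ}) :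
    Δ ∈ lfpTPs P := by
  obtain ⟨C₀, hcs, hcov, hmemΔ, -⟩ := exists_C0 hreach
  have hC₀L : C₀ ∈ Lset P :=
    ⟨hcs, fun X hX D hD => hcov D (prefixed_elt_saturated hX.1 hX.2 hD)⟩
  rw [lfp_eq']
  apply mem_sjoin_self
  · intro C hC
    exact hC.2 _ (singleton_mem_PreFix hsat) Δ (Set.mem_singleton_iff.mpr rfl)
  · exact ⟨C₀, hC₀L, hmemΔ⟩

/-! #### Completeness: from the least fixed point to the algorithm -/

lemma progress {P : Program} {Δ Δ₀ : CDB} (hpos : CDBPositive Δ) (hsatΔ : TP P Δ = {Δ})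
    (hlfp : Δ ∈ lfpTPs P) (hle : Δ₀ ≤ Δ)
    (hinv : ∀ a, Δ₀ a = .noneOf ∅ ∨ Δ₀ a = Δ a) (hne : Δ₀ ≠ Δ) :
    ∃ (a : Attr) (t : GTerm) (r : Rule) (σ : Subst), r ∈ P ∧ satC σ r.prems Δ₀ ∧
      r.head.groundAttr σ = a ∧ Δ a = .just t ∧ Δ₀ a ≠ Δ a ∧
      unitCDB a (.just t) ∈ headChoice σ r.head := by
  by_contra hcon
  push_neg at hcon
  -- the lingering open-head values at each attribute
  set Xs : Attr → Set GTerm := fun a =>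
    { w | ∃ r ∈ P, ∃ σ : Subst, satC σ r.prems Δ₀ ∧ r.head.groundAttr σ = a ∧
          ∃ p args v, r.head = .opn p args v ∧ VTerm.subst σ v = w } with hXs
  set D₀ : CDB := fun a => if Δ₀ a = Δ a then Δ a else .noneOf (Xs a) with hD₀
  have f0 : ∀ a, Δ₀ a ≠ Δ a → ∃ t, Δ a = .just t ∧ Δ₀ a = .noneOf ∅ := by
    intro a ha
    have h1 : Δ₀ a = .noneOf ∅ := (hinv a).resolve_right ha
    cases hΔa : Δ a with
    | just t => exact ⟨t, rfl, h1⟩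
    | noneOf X =>
      rw [hpos a X hΔa] at hΔa
      exact absurd (h1.trans hΔa.symm) ha
  have f1 : ∀ a v, D₀ a = .just v ↔ Δ₀ a = .just v := by
    intro a v
    rw [hD₀]
    by_cases ha : Δ₀ a = Δ a
    · simp only [if_pos ha]; rw [ha]
    · simp only [if_neg ha]
      constructor
      · intro h; exact absurd h (by simp)
      · intro h
        have := just_le_iff.mp (h ▸ hle a)
        exact absurd (h.trans this.symm) ha
  have f2 : ∀ (σ : Subst) (F : List VAtom), satC σ F D₀ ↔ satC σ F Δ₀ := by
    intro σ F
    constructor <;> intro h A hA <;> rw [just_le_iff] <;>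
      [rw [← f1]; rw [f1]] <;> exact just_le_iff.mp (h A hA)
  have f3 : ∀ a t, Δ₀ a ≠ Δ a → Δ a = .just t → t ∉ Xs a := by
    intro a t ha hΔa hmem
    obtain ⟨r, hr, σ, hsat₀, hattr, p, args, v, hhead, hsubst⟩ := hmem
    refine hcon a t r σ hr hsat₀ hattr hΔa ha ?_
    rw [hhead]
    have hga : (Head.opn p args v).groundAttr σ = a := hhead ▸ hattr
    exact Or.inl (by rw [← hsubst, ← hga]; rfl)
  have f4 : D₀ ≤ Δ := by
    intro a
    rw [hD₀]
    by_cases ha : Δ₀ a = Δ a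
    · simp only [if_pos ha]; exact Constraint.le_refl _
    · simp only [if_neg ha]
      obtain ⟨t, hΔa, -⟩ := f0 a ha
      rw [hΔa]
      exact noneOf_le_just.mpr (f3 a t ha hΔa)
  have f5 : ∀ C ∈ Hset P D₀, ∃ c ∈ C, c ≤ D₀ := by
    rintro C ⟨r, hr, σ, hsat', rfl⟩
    have hsat₀ : satC σ r.prems Δ₀ := (f2 σ r.prems).mp hsat'
    have hsatΔ' : satC σ r.prems Δ := satC_mono hle hsat₀
    set a := r.head.groundAttr σ with hadef
    by_cases ha : Δ₀ a = Δ a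
    · obtain ⟨c, hc, hcΔ⟩ := star_of_mem_TP_self (mem_TP_of_sat hsatΔ) _
        ⟨r, hr, σ, hsatΔ', rfl⟩
      refine ⟨c, hc, ?_⟩
      obtain ⟨k, rfl⟩ := headChoice_unit hc
      rw [unitCDB_le_iff] at hcΔ ⊢
      have hDa : D₀ a = Δ a := by rw [hD₀]; simp only [if_pos ha]
      show k ≤ D₀ a
      rw [hDa]
      exact hcΔ
    · obtain ⟨t, hΔa, -⟩ := f0 a ha
      have hD₀a : D₀ a = .noneOf (Xs a) := by
        rw [hD₀]; simp only [if_neg ha]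
      rcases hhead : r.head with ⟨p, args, v⟩ | ⟨p, args, vs⟩
      · -- open head: pick the noneOf branch
        have hwXs : VTerm.subst σ v ∈ Xs a :=
          ⟨r, hr, σ, hsat₀, hadef.symm, p, args, v, hhead, rfl⟩
        refine ⟨unitCDB ((Head.opn p args v).groundAttr σ)
          (.noneOf {VTerm.subst σ v}), Or.inr rfl, ?_⟩
        rw [unitCDB_le_iff]
        have hga : (Head.opn p args v).groundAttr σ = a := hhead ▸ hadef.symm
        rw [hga, hD₀a]
        exact noneOf_le_noneOf.mpr (by intro w hw; rwa [Set.mem_singleton_iff.mp hw])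
      · -- closed head: contradiction with hcon
        exfalso
        obtain ⟨c, hc, hcΔ⟩ := star_of_mem_TP_self (mem_TP_of_sat hsatΔ) _
          ⟨r, hr, σ, hsatΔ', rfl⟩
        rw [hhead] at hc
        obtain ⟨v, hv, rfl⟩ := hc
        have hga : (Head.closed p args vs).groundAttr σ = a := hhead ▸ hadef.symm
        have hga' : ({ pred := p, args := List.map (VTerm.subst σ) args } : Attr) = a := hga
        rw [unitCDB_le_iff] at hcΔ
        rw [hga', hΔa, just_le_iff] at hcΔ
        have hvt : VTerm.subst σ v = t := (Constraint.just.inj hcΔ).symm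
        refine hcon a t r σ hr hsat₀ hadef.symm hΔa ha ?_
        rw [hhead]
        exact ⟨v, hv, by rw [hvt, hga']⟩
  have f6 : TP P D₀ = {D₀} := TP_eq_singleton_of_star f5
  -- derive the contradiction from lfp membership
  have hne' : ∃ a, Δ₀ a ≠ Δ a := by
    by_contra hno
    push_neg at hno
    exact hne (funext hno)
  obtain ⟨a₁, ha₁⟩ := hne'
  obtain ⟨t, hΔa₁, -⟩ := f0 a₁ ha₁
  have hD₀a₁ : D₀ a₁ = .noneOf (Xs a₁) := by
    rw [hD₀]; simp only [if_neg ha₁]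
  rw [lfp_eq'] at hlfp
  obtain ⟨f, hf, hcomp, hΔeq⟩ := mem_sjoin_iff.mp hlfp
  have hlubJ : Constraint.just t ∈ (fun Δ' => Δ' a₁) '' Set.range f := by
    apply Constraint.lub_just
    rw [← CDB.lub_apply, ← hΔeq, hΔa₁]
  obtain ⟨x, ⟨i, rfl⟩, hx⟩ := hlubJ
  have hfiΔ : f i ≤ Δ := hΔeq ▸ CDB.le_lub hcomp _ (Set.mem_range_self i)
  obtain ⟨e, he, heD₀⟩ := i.2.2 {D₀} (singleton_mem_PreFix f6) D₀
    (Set.mem_singleton_iff.mpr rfl)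
  have hefi : e = f i := i.2.1 e he (f i) (hf i)
    (compat_of_le (CDB.le_trans heD₀ f4) hfiΔ)
  have : f i a₁ ≤ D₀ a₁ := hefi ▸ heD₀ a₁
  rw [hD₀a₁] at this
  have hxa : f i a₁ = Constraint.just t := hx
  rw [hxa] at this
  exact just_not_le_noneOf this

lemma reachable_of_lfp {P : Program} {Δ : CDB} (hpos : CDBPositive Δ)
    (hfin : CDBFinite Δ) (hlfp : Δ ∈ lfpTPs P) :
    Relation.ReflTransGen (AlgStep P) cdbBot Δ := by
  have hsatΔ : TP P Δ = {Δ} := saturated_of_mem_lfp hlfp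
  have main : ∀ n (Δ₀ : CDB), Δ₀ ≤ Δ → (∀ a, Δ₀ a = .noneOf ∅ ∨ Δ₀ a = Δ a) →
      {a | Δ₀ a ≠ Δ a}.ncard ≤ n → Relation.ReflTransGen (AlgStep P) Δ₀ Δ := by
    intro n
    induction n with
    | zero =>
      intro Δ₀ h1 h2 h3
      have hfin₀ : {a | Δ₀ a ≠ Δ a}.Finite := by
        apply hfin.1.subset
        intro a ha
        have hb : Δ₀ a = .noneOf ∅ := (h2 a).resolve_right ha
        intro hΔa
        exact ha (hb.trans hΔa.symm)
      have hempty : {a | Δ₀ a ≠ Δ a} = ∅ :=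
        (Set.ncard_eq_zero hfin₀).mp (Nat.le_zero.mp h3)
      have : Δ₀ = Δ := by
        funext a
        by_contra hne
        exact absurd hempty (Set.nonempty_iff_ne_empty.mp ⟨a, hne⟩)
      rw [this]
    | succ n ih =>
      intro Δ₀ h1 h2 h3
      by_cases hne : Δ₀ = Δ
      · rw [hne]
      · obtain ⟨a, t, r, σ, hr, hsat₀, hattr, hΔa, hne_a, hmemHC⟩ :=
          progress hpos hsatΔ hlfp h1 h2 hne
        -- construct the element E of TPa with E a = just t
        have keyC : ∀ C ∈ TPaSet P a Δ₀, ∃ c, c ∈ C ∧ c ≤ Δ ∧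
            (unitCDB a (.just t) ∈ C → c = unitCDB a (.just t)) := by
          intro C hC
          by_cases hu : unitCDB a (.just t) ∈ C
          · exact ⟨_, hu, unitCDB_le_iff.mpr (by rw [hΔa]), fun _ => rfl⟩
          · obtain ⟨c, hc, hcΔ⟩ := star_of_mem_TP_self (mem_TP_of_sat hsatΔ) C
              (Hset_mono h1 (TPaSet_subset hC))
            exact ⟨c, hc, hcΔ, fun h => absurd h hu⟩
        have hC₀mem : headChoice σ r.head ∈ TPaSet P a Δ₀ := ⟨r, hr, σ, hsat₀, hattr, rfl⟩
        set g : TPaSet P a Δ₀ → CDB := fun i => (keyC i.1 i.2).choose with hg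
        have hgmem : ∀ i, g i ∈ i.1 := fun i => (keyC i.1 i.2).choose_spec.1
        have hgle : ∀ i, g i ≤ Δ := fun i => (keyC i.1 i.2).choose_spec.2.1
        set E : CDB := CDB.lub (Set.range g) with hE
        have hEmem : E ∈ TPa P a Δ₀ :=
          mem_sjoin_iff.mpr ⟨g, hgmem, ⟨Δ, by rintro x ⟨i, rfl⟩; exact hgle i⟩, rfl⟩
        have hEle : E ≤ Δ := CDB.lub_le (by rintro x ⟨i, rfl⟩; exact hgle i)
        have hEa : E a = .just t := by
          rw [hE, CDB.lub_apply]
          apply Constraint.lub_attained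
          · refine ⟨g ⟨_, hC₀mem⟩, Set.mem_range_self _, ?_⟩
            show g ⟨_, hC₀mem⟩ a = _
            have h5 : g ⟨_, hC₀mem⟩ = unitCDB a (.just t) :=
              (keyC _ hC₀mem).choose_spec.2.2 hmemHC
            rw [h5, unitCDB_apply_self]
          · rintro c ⟨x, ⟨i, rfl⟩, rfl⟩
            have := hgle i a
            rwa [hΔa] at this
        set Δ₁ : CDB := CDB.lub {Δ₀, E} with hΔ₁
        have hrange : Δ₁ ∈ ChoiceSJoin {({Δ₀} : Set CDB), TPa P a Δ₀} := by
          refine mem_sjoin_iff.mpr ⟨fun i => if i.1 = {Δ₀} then Δ₀ else E, ?_, ?_, ?_⟩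
          · intro i
            show (if i.1 = {Δ₀} then Δ₀ else E) ∈ i.1
            by_cases hi : i.1 = {Δ₀}
            · rw [if_pos hi, hi]; exact Set.mem_singleton_iff.mpr rfl
            · rw [if_neg hi]
              have h6 := (Set.mem_insert_iff.mp i.2).resolve_left hi
              rw [Set.mem_singleton_iff.mp h6]
              exact hEmem
          · refine ⟨Δ, ?_⟩
            rintro x ⟨i, rfl⟩
            show (if i.1 = {Δ₀} then Δ₀ else E) ≤ Δ
            by_cases hi : i.1 = {Δ₀}
            · rw [if_pos hi]; exact h1
            · rw [if_neg hi]; exact hEle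
          · rw [hΔ₁]
            refine congrArg CDB.lub ?_
            apply Set.eq_of_subset_of_subset
            · intro x hx
              rcases Set.mem_insert_iff.mp hx with h8 | h8
              · refine ⟨⟨{Δ₀}, Set.mem_insert _ _⟩, ?_⟩
                show (if ({Δ₀} : Set CDB) = {Δ₀} then Δ₀ else E) = x
                rw [if_pos rfl, h8]
              · rw [Set.mem_singleton_iff] at h8
                refine ⟨⟨TPa P a Δ₀, Set.mem_insert_of_mem _ rfl⟩, ?_⟩
                show (if TPa P a Δ₀ = {Δ₀} then Δ₀ else E) = x
                by_cases hT : TPa P a Δ₀ = ({Δ₀} : Set CDB)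
                · rw [if_pos hT, h8]
                  have h7 : E ∈ ({Δ₀} : Set CDB) := hT ▸ hEmem
                  rw [Set.mem_singleton_iff.mp h7]
                · rw [if_neg hT, h8]
            · rintro x ⟨i, rfl⟩
              show (if i.1 = {Δ₀} then Δ₀ else E) ∈ ({Δ₀, E} : Set CDB)
              by_cases hi : i.1 = {Δ₀}
              · rw [if_pos hi]; exact Set.mem_insert _ _
              · rw [if_neg hi]; exact Set.mem_insert_of_mem _ rfl
        have hTPne : TP P Δ₀ ≠ ∅ := by
          have hpicks : ∀ C ∈ insert {Δ₀} (Hset P Δ₀), ∃ c ∈ C, c ≤ Δ := by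
            intro C hC
            rcases Set.mem_insert_iff.mp hC with rfl | hC
            · exact ⟨Δ₀, Set.mem_singleton_iff.mpr rfl, h1⟩
            · exact star_of_mem_TP_self (mem_TP_of_sat hsatΔ) C (Hset_mono h1 hC)
          obtain ⟨W, hW, -⟩ := mem_sjoin_le hpicks
          intro hemp
          have hW' : W ∈ TP P Δ₀ := hW
          rw [hemp] at hW'
          exact Set.notMem_empty W hW'
        have hstep : AlgStep P Δ₀ Δ₁ := ⟨hTPne, a, hrange⟩
        have hΔ₁le : Δ₁ ≤ Δ := by
          apply CDB.lub_le
          rintro x hx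
          rcases hx with rfl | hx
          · exact h1
          · rw [Set.mem_singleton_iff.mp hx]; exact hEle
        have hΔ₁a : Δ₁ a = Δ a := by
          rw [hΔa, hΔ₁, CDB.lub_apply]
          apply Constraint.lub_attained
          · exact ⟨E, Set.mem_insert_of_mem _ rfl, hEa⟩
          · rintro c ⟨x, hx, rfl⟩
            show x a ≤ Constraint.just t
            rcases Set.mem_insert_iff.mp hx with h8 | h8
            · rw [h8]
              have h9 := h1 a
              rwa [hΔa] at h9
            · rw [Set.mem_singleton_iff.mp h8, hEa]
        have hΔ₁ne : ∀ a', a' ≠ a → Δ₁ a' = Δ₀ a' := fun a' ha' =>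
          step_apply_ne hrange ha'
        have hinv₁ : ∀ a', Δ₁ a' = .noneOf ∅ ∨ Δ₁ a' = Δ a' := by
          intro a'
          by_cases ha' : a' = a
          · subst ha'; exact Or.inr hΔ₁a
          · rw [hΔ₁ne a' ha']; exact h2 a'
        have hssub : {a' | Δ₁ a' ≠ Δ a'} ⊂ {a' | Δ₀ a' ≠ Δ a'} := by
          constructor
          · intro a' ha'
            by_cases haa : a' = a
            · subst haa; exact absurd hΔ₁a ha'
            · rwa [Set.mem_setOf_eq, hΔ₁ne a' haa] at ha'
          · intro hsub
            have := hsub hne_a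
            exact this hΔ₁a
        have hfin₀ : {a' | Δ₀ a' ≠ Δ a'}.Finite := by
          apply hfin.1.subset
          intro a' ha'
          have hb : Δ₀ a' = .noneOf ∅ := (h2 a').resolve_right ha'
          intro hΔa'
          exact ha' (hb.trans hΔa'.symm)
        have hcard : {a' | Δ₁ a' ≠ Δ a'}.ncard ≤ n := by
          have := Set.ncard_lt_ncard hssub hfin₀
          omega
        exact Relation.ReflTransGen.head hstep (ih Δ₁ hΔ₁le hinv₁ hcard)
  exact main _ cdbBot (cdbBot_le Δ) (fun _ => Or.inl rfl) le_rfl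

end ProofDev

/-- Correctness of the abstract algorithm: for positive `Δ`, the algorithm can
successfully return `Δ` iff `Δ ∈ lfp T_P*` and `Δ` is finite. -/
theorem algorithm_correct (P : Program) (hP : Program.WFP P) (Δ : CDB)
    (hpos : CDBPositive Δ) :
    (Relation.ReflTransGen (AlgStep P) cdbBot Δ ∧ TP P Δ = {Δ}) ↔
      (Δ ∈ lfpTPs P ∧ CDBFinite Δ) := by
  constructor
  · rintro ⟨hreach, hsat⟩
    refine ⟨mem_lfp_of_reachable_saturated hreach hsat, reachable_supp hreach, ?_⟩
    intro a X hX
    rw [hpos a X hX]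
    exact Set.finite_empty
  · rintro ⟨hlfp, hfin⟩
    exact ⟨reachable_of_lfp hpos hfin hlfp, saturated_of_mem_lfp hlfp⟩

end FCLP
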